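/- arXiv:2202.12798 — 5 statements merged into one kernel-verified Lean document; each statement's English description precedes it below -/
import Mathlib

section
/- Let Φ : 𝒜 → ℬ be a unital 2-positive (not necessarily linear) map between unital C*-algebras. Then Φ(A*) = Φ(A)* for every A ∈ 𝒜, and the Choi-type inequality Φ(A*A) ≥ Φ(A*)Φ(A) holds for every A ∈ 𝒜. -/
/-- An element of a C*-algebra is positive if and only if it is of the form `star b * b`. -/
def IsPosElem {A : Type*} [Mul A] [Star A] (a : A) : Prop := ∃ b : A, a = star b * b

/-- A (not necessarily linear) map `Φ : A → B` is `n`-positive if the entrywise induced map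
on `n × n` matrices sends positive matrices to positive matrices. -/
def IsNPosMap {A B : Type*} [NonUnitalNonAssocSemiring A] [Star A]
    [NonUnitalNonAssocSemiring B] [Star B] (n : ℕ) (Φ : A → B) : Prop :=
  ∀ M : Matrix (Fin n) (Fin n) A, IsPosElem M → IsPosElem (M.map Φ)

/-!
Apply `Φ₂` to the positive matrix `[[1, A], [A*, A*A]] = [[1, A], [0, 0]]* [[1, A], [0, 0]]`.
The image `P` is again of the form `N* N`, hence self-adjoint, which gives `Φ(A*) = Φ(A)*`.
Since `P₀₀ = Φ(1) = 1`, the congruence of `P` by `[[1, -Φ(A)], [0, 1]]` is positive and has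
`Φ(A*A) - Φ(A*)Φ(A)` as its lower diagonal entry, which is a sum of elements `x* x`, hence
positive in a C*-algebra.
-/

open Matrix

theorem isPosElem_sum_star_mul_self {B ι : Type*} [NonUnitalCStarAlgebra B] (s : Finset ι)
    (f : ι → B) : IsPosElem (∑ k ∈ s, star (f k) * f k) := by
  let _ := CStarAlgebra.spectralOrder B
  let _ := CStarAlgebra.spectralOrderedRing B
  exact CStarAlgebra.nonneg_iff_eq_star_mul_self.mp
    (Finset.sum_nonneg fun k _ => star_mul_self_nonneg (f k))

theorem isPosElem_vecMulVec_star {R n : Type*} [NonUnitalSemiring R] [StarRing R] [Fintype n]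
    [Nonempty n] (v : n → R) : IsPosElem (vecMulVec (star v) v) := by
  classical
  obtain ⟨i₀⟩ := ‹Nonempty n›
  refine ⟨updateRow 0 i₀ v, ?_⟩
  ext i j
  simp [mul_apply, updateRow_apply, vecMulVec_apply]

namespace IsPosElem

theorem isSelfAdjoint {R : Type*} [Mul R] [StarMul R] {a : R} (ha : IsPosElem a) :
    IsSelfAdjoint a := by
  obtain ⟨b, rfl⟩ := ha
  exact .star_mul_self b

theorem star_mul_mul {R : Type*} [Semigroup R] [StarMul R] {a : R} (ha : IsPosElem a) (e : R) :
    IsPosElem (star e * a * e) := by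
  obtain ⟨b, rfl⟩ := ha
  exact ⟨b * e, by simp only [star_mul, mul_assoc]⟩

theorem apply_self {B n : Type*} [NonUnitalCStarAlgebra B] [Fintype n] {P : Matrix n n B}
    (hP : IsPosElem P) (i : n) : IsPosElem (P i i) := by
  obtain ⟨N, rfl⟩ := hP
  simpa only [mul_apply, star_apply] using isPosElem_sum_star_mul_self Finset.univ (N · i)

theorem schur_complement_fin_two {B : Type*} [CStarAlgebra B] {P : Matrix (Fin 2) (Fin 2) B}
    (hP : IsPosElem P) (h00 : P 0 0 = 1) : IsPosElem (P 1 1 - P 1 0 * P 0 1) := by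
  convert (hP.star_mul_mul !![1, -P 0 1; 0, 1]).apply_self 1 using 1
  simp only [Fin.isValue, mul_apply, star_apply, of_apply, cons_val', cons_val_one,
    cons_val_fin_one, Fin.sum_univ_two, cons_val_zero, star_neg, neg_mul, star_one, one_mul, h00,
    mul_one, mul_neg]
  noncomm_ring

end IsPosElem

/-- A unital 2-positive (not necessarily linear) map between unital C*-algebras is
star-preserving and satisfies the Choi-type inequality `Φ(A*A) ≥ Φ(A*)Φ(A)`. -/
theorem unital_two_positive_star_preserving_and_choi
    {𝒜 ℬ : Type*} [CStarAlgebra 𝒜] [CStarAlgebra ℬ]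
    (Φ : 𝒜 → ℬ) (hunital : Φ 1 = 1) (h2 : IsNPosMap 2 Φ) :
    ∀ A : 𝒜, Φ (star A) = star (Φ A) ∧
      IsPosElem (Φ (star A * A) - Φ (star A) * Φ A) := by
  intro A
  have hP := h2 _ (isPosElem_vecMulVec_star ![1, A])
  refine ⟨?_, ?_⟩
  · simpa [vecMulVec_apply] using (IsHermitian.apply hP.isSelfAdjoint 1 0).symm
  · simpa [vecMulVec_apply] using hP.schur_complement_fin_two (by simp [hunital])
end

section
/- Let Φ : 𝒜 → ℬ be a 3-positive (not necessarily linear) map between unital C*-algebras. If P and Q are elements of 𝒜 with P ≥ Q ≥ 0 and Φ(P) = Φ(Q), then Φ(P − Q) = Φ(0). -/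
/-!
The matrix `[[P, Q, P - Q], [Q, Q, 0], [P - Q, 0, P - Q]]` is `C⋆C` for
`C = [[q, q, 0], [r, 0, r], [0, 0, 0]]`, where `Q = q⋆q` and `P - Q = r⋆r`, so its image under
`Φ₃` is positive. Since `Φ P = Φ Q`, the quadratic form of that image at `(t, -t, 1)` equals
`2t (Φ(P - Q) - Φ 0) + Φ(P - Q)`. Being nonnegative for every real `t`, and the positive cone
being closed, this forces `Φ(P - Q) - Φ 0` to be both `≥ 0` and `≤ 0`.
-/

open Matrix Filter Topology

section OrderedModule

variable {E : Type*} [AddCommGroup E] [PartialOrder E] [Module ℝ E] [PosSMulMono ℝ E]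
  [TopologicalSpace E] [ContinuousAdd E] [ContinuousSMul ℝ E] [ClosedIciTopology E] {s y : E}

lemma nonneg_of_forall_smul_add_nonneg (h : ∀ t : ℝ, 0 ≤ t • s + y) : 0 ≤ s := by
  have hlim : Tendsto (fun ε : ℝ => s + ε • y) (𝓝[>] 0) (𝓝 s) := by
    simpa using tendsto_const_nhds.add
      ((tendsto_nhdsWithin_of_tendsto_nhds (tendsto_id (x := 𝓝 (0 : ℝ)))).smul_const y)
  refine ge_of_tendsto hlim (eventually_nhdsWithin_of_forall fun ε (hε : 0 < ε) => ?_)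
  have := smul_nonneg hε.le (h ε⁻¹)
  rwa [smul_add, smul_smul, mul_inv_cancel₀ hε.ne', one_smul] at this

lemma eq_zero_of_forall_smul_add_nonneg [IsOrderedAddMonoid E] (h : ∀ t : ℝ, 0 ≤ t • s + y) :
    s = 0 :=
  le_antisymm (neg_nonneg.1 <| nonneg_of_forall_smul_add_nonneg fun t => by simpa using h (-t))
    (nonneg_of_forall_smul_add_nonneg h)

end OrderedModule

lemma IsPosElem.star_dotProduct_mulVec_nonneg {n R : Type*} [Fintype n] [NonUnitalSemiring R]
    [PartialOrder R] [StarRing R] [StarOrderedRing R] {M : Matrix n n R} (hM : IsPosElem M)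
    (w : n → R) : 0 ≤ star w ⬝ᵥ (M *ᵥ w) := by
  obtain ⟨c, rfl⟩ := hM
  rw [star_eq_conjTranspose, ← mulVec_mulVec, dotProduct_mulVec, ← star_mulVec]
  exact Finset.sum_nonneg fun i _ => star_mul_self_nonneg _

lemma isPosElem_matrix_of_ge {R : Type*} [Ring R] [StarRing R] {P Q : R}
    (hQ : IsPosElem Q) (hPQ : IsPosElem (P - Q)) :
    IsPosElem !![P, Q, P - Q; Q, Q, 0; P - Q, 0, P - Q] := by
  obtain ⟨q, hq⟩ := hQ
  obtain ⟨r, hr⟩ := hPQ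
  refine ⟨!![q, q, 0; r, 0, r; 0, 0, 0], ?_⟩
  have hP : P = star q * q + star r * r := by rw [← hq, ← hr, add_sub_cancel]
  rw [hr, hP, hq]
  ext i j
  fin_cases i <;> fin_cases j <;> simp [mul_apply, Fin.sum_univ_three]

lemma star_dotProduct_map_mulVec_eq {A R : Type*} [Ring A] [Ring R] [StarRing R] [Algebra ℝ R]
    [StarModule ℝ R] (Φ : A → R) {P Q : A} (hΦ : Φ P = Φ Q) (t : ℝ) :
    star ![t • 1, -(t • 1), 1] ⬝ᵥ
        ((!![P, Q, P - Q; Q, Q, 0; P - Q, 0, P - Q]).map Φ *ᵥ ![t • 1, -(t • 1), 1])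
      = (2 * t) • (Φ (P - Q) - Φ 0) + Φ (P - Q) := by
  simp only [dotProduct, Pi.star_apply, mulVec, map_apply, of_apply, cons_val', cons_val_fin_one,
    Fin.sum_univ_three, cons_val_zero, cons_val_one, cons_val, Algebra.mul_smul_comm,
    Algebra.smul_mul_assoc, mul_one, one_mul, mul_neg, neg_mul, star_smul, star_trivial, star_one,
    star_neg, hΦ]
  module

/-- Lemma 3.3: if `Φ` is a 3-positive (not necessarily linear) map between unital
C*-algebras, `P ≥ Q ≥ 0` and `Φ(P) = Φ(Q)`, then `Φ(P − Q) = Φ(0)`. -/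
theorem three_positive_cancellation
    {𝒜 ℬ : Type*} [CStarAlgebra 𝒜] [CStarAlgebra ℬ]
    (Φ : 𝒜 → ℬ) (h3 : IsNPosMap 3 Φ) (P Q : 𝒜)
    (hQ : IsPosElem Q) (hPQ : IsPosElem (P - Q)) (hPhi : Φ P = Φ Q) :
    Φ (P - Q) = Φ 0 := by
  let := CStarAlgebra.spectralOrder ℬ
  let := CStarAlgebra.spectralOrderedRing ℬ
  have hM := h3 _ (isPosElem_matrix_of_ge hQ hPQ)
  refine sub_eq_zero.1 (eq_zero_of_forall_smul_add_nonneg (y := Φ (P - Q)) fun t => ?_)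
  have := hM.star_dotProduct_mulVec_nonneg ![(t / 2) • 1, -((t / 2) • 1), 1]
  rwa [star_dotProduct_map_mulVec_eq Φ hPhi, mul_div_cancel₀ t two_ne_zero] at this
end

section
/- Let 𝒜 be a unital C*-algebra containing elements V and S with V*V = S*S = I and VV* + SS* = I (so that P = VV* is a projection with I − P = SS* and P ∼ I − P ∼ I in the sense of Murray–von Neumann equivalence; such V, S exist in any properly infinite von Neumann algebra), and let ℬ be a unital C*-algebra. If Φ : 𝒜 → ℬ is a 3-positive (not necessarily linear) map satisfying Φ(X*X) = Φ(XX*) for all X ∈ 𝒜, then Φ is constant, i.e., Φ(X) = Φ(0) for every X ∈ 𝒜. -/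
open Matrix

theorem eq_zero_of_sum_star_mul_self_eq_zero {B ι : Type*} [NonUnitalCStarAlgebra B]
    {s : Finset ι} {x : ι → B} (h : ∑ k ∈ s, star (x k) * x k = 0) : ∀ k ∈ s, x k = 0 := by
  let := CStarAlgebra.spectralOrder B
  let := CStarAlgebra.spectralOrderedRing B
  intro k hk
  rw [← CStarRing.star_mul_self_eq_zero_iff]
  exact (Finset.sum_eq_zero_iff_of_nonneg fun k _ => star_mul_self_nonneg (x k)).mp h k hk

theorem Matrix.conjTranspose_mul_self_row_eq {B m n : Type*} [NonUnitalCStarAlgebra B]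
    [Fintype m] (D : Matrix m n B) {i i' : n} (hii' : (Dᴴ * D) i i' = (Dᴴ * D) i i)
    (hi'i : (Dᴴ * D) i' i = (Dᴴ * D) i i) (hi'i' : (Dᴴ * D) i' i' = (Dᴴ * D) i i) (j : n) :
    (Dᴴ * D) i j = (Dᴴ * D) i' j := by
  have hsum : ∑ k, star (D k i - D k i') * (D k i - D k i') = 0 := by
    have expand : ∀ k, star (D k i - D k i') * (D k i - D k i') =
        star (D k i) * D k i - star (D k i) * D k i' - star (D k i') * D k i
          + star (D k i') * D k i' := by
      intro k
      simp only [star_sub]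
      noncomm_ring
    simp only [mul_apply, conjTranspose_apply] at hii' hi'i hi'i'
    rw [Finset.sum_congr rfl fun k _ => expand k, Finset.sum_add_distrib, Finset.sum_sub_distrib,
      Finset.sum_sub_distrib, hii', hi'i, hi'i']
    abel
  have hcol : ∀ k, D k i = D k i' := fun k =>
    sub_eq_zero.mp (eq_zero_of_sum_star_mul_self_eq_zero hsum k (Finset.mem_univ k))
  simp only [mul_apply, conjTranspose_apply, hcol]

namespace IsNPosMap

variable {A B : Type*}

theorem exists_apply_star_mul_eq_conjTranspose_mul_self [NonUnitalNonAssocSemiring A] [Star A]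
    [NonUnitalNonAssocSemiring B] [Star B] {n : ℕ} [NeZero n] {Φ : A → B}
    (hΦ : IsNPosMap n Φ) (r : Fin n → A) :
    ∃ D : Matrix (Fin n) (Fin n) B, ∀ i j, Φ (star (r i) * r j) = (Dᴴ * D) i j := by
  let C : Matrix (Fin n) (Fin n) A := of fun k j => if k = 0 then r j else 0
  have hC : ∀ i j, (star C * C) i j = star (r i) * r j := by
    intro i j
    rw [star_eq_conjTranspose, mul_apply, Finset.sum_eq_single 0 (fun k _ hk => by simp [C, hk])
      (by simp)]
    simp [C]
  obtain ⟨D, hD⟩ := hΦ (star C * C) ⟨C, rfl⟩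
  refine ⟨D, fun i j => ?_⟩
  rw [← hC, ← map_apply (f := Φ), hD, star_eq_conjTranspose]

theorem apply_star_mul_eq_of_apply_star_mul_eq [NonUnitalNonAssocSemiring A] [Star A]
    [NonUnitalCStarAlgebra B] {Φ : A → B} (hΦ : IsNPosMap 3 Φ) {a b : A}
    (hab : Φ (star a * b) = Φ (star a * a)) (hba : Φ (star b * a) = Φ (star a * a))
    (hbb : Φ (star b * b) = Φ (star a * a)) (x : A) :
    Φ (star a * x) = Φ (star b * x) := by
  obtain ⟨D, hD⟩ := hΦ.exists_apply_star_mul_eq_conjTranspose_mul_self ![a, b, x]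
  calc Φ (star a * x) = (Dᴴ * D) 0 2 := hD 0 2
    _ = (Dᴴ * D) 1 2 := D.conjTranspose_mul_self_row_eq ?_ ?_ ?_ 2
    _ = Φ (star b * x) := (hD 1 2).symm
  all_goals rw [← hD, ← hD]
  exacts [hab, hba, hbb]

theorem apply_mul_eq_of_apply_eq_apply_one [Semiring A] [StarMul A] [NonUnitalCStarAlgebra B]
    {Φ : A → B} (hΦ : IsNPosMap 3 Φ) {p : A} (hp : IsStarProjection p) (hΦp : Φ p = Φ 1)
    (x : A) : Φ (p * x) = Φ x := by
  have key := hΦ.apply_star_mul_eq_of_apply_star_mul_eq (a := 1) (b := p) ?_ ?_ ?_ x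
  · rwa [star_one, one_mul, hp.isSelfAdjoint.star_eq, eq_comm] at key
  all_goals simpa only [star_one, one_mul, mul_one, hp.isSelfAdjoint.star_eq,
    hp.isIdempotentElem.eq] using hΦp

end IsNPosMap

theorem isStarProjection_mul_star_of_star_mul_self_eq_one {R : Type*} [Monoid R] [StarMul R]
    {v : R} (hv : star v * v = 1) : IsStarProjection (v * star v) where
  isIdempotentElem := by rw [IsIdempotentElem, mul_assoc, ← mul_assoc (star v), hv, one_mul]
  isSelfAdjoint := IsSelfAdjoint.mul_star_self v

theorem star_mul_eq_zero_of_mul_star_add_mul_star_eq_one {R : Type*} [Ring R] [Star R]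
    {v s : R} (hv : star v * v = 1) (hs : star s * s = 1) (hvs : v * star v + s * star s = 1) :
    star s * v = 0 := by
  have h : star s * v = star s * v + star s * v :=
    calc star s * v = star s * ((v * star v + s * star s) * v) := by rw [hvs, one_mul]
      _ = star s * v * (star v * v) + star s * s * (star s * v) := by noncomm_ring
      _ = star s * v + star s * v := by rw [hv, hs, mul_one, one_mul]
  exact left_eq_add.mp h

/-- Lemma 3.5 (i): let `𝒜` be a unital C*-algebra containing isometries `V, S` with
`V*V = S*S = 1` and `VV* + SS* = 1` (as in a properly infinite von Neumann algebra).
If `Φ : 𝒜 → ℬ` is 3-positive and satisfies `Φ(X*X) = Φ(XX*)` for every `X`,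
then `Φ` is constant: `Φ(X) = Φ(0)` for all `X`. -/
theorem three_positive_tracial_on_properly_infinite_is_constant
    {𝒜 ℬ : Type*} [CStarAlgebra 𝒜] [CStarAlgebra ℬ]
    (V S : 𝒜) (hV : star V * V = 1) (hS : star S * S = 1)
    (hVS : V * star V + S * star S = 1)
    (Φ : 𝒜 → ℬ) (h3 : IsNPosMap 3 Φ)
    (htr : ∀ X : 𝒜, Φ (star X * X) = Φ (X * star X)) :
    ∀ X : 𝒜, Φ X = Φ 0 := by
  intro X
  have hΦP : Φ (V * star V) = Φ 1 := by rw [← htr, hV]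
  have hΦQ : Φ (S * star S) = Φ 1 := by rw [← htr, hS]
  have hQP : S * star S * (V * star V * X) = 0 := by
    rw [mul_assoc, ← mul_assoc (star S), ← mul_assoc (star S),
      star_mul_eq_zero_of_mul_star_add_mul_star_eq_one hV hS hVS, zero_mul, zero_mul, mul_zero]
  calc Φ X = Φ (V * star V * X) :=
        (h3.apply_mul_eq_of_apply_eq_apply_one
          (isStarProjection_mul_star_of_star_mul_self_eq_one hV) hΦP X).symm
    _ = Φ (S * star S * (V * star V * X)) :=
        (h3.apply_mul_eq_of_apply_eq_apply_one
          (isStarProjection_mul_star_of_star_mul_self_eq_one hS) hΦQ _).symm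
    _ = Φ 0 := by rw [hQP]
end

section
/- Let 𝒜₁, …, 𝒜_k and ℬ be unital C*-algebras and suppose that for some index j the algebra 𝒜_j contains elements V and S with V*V = S*S = I_j and VV* + SS* = I_j (such V, S exist in any properly infinite von Neumann algebra). Then every positive multilinear map Ψ : 𝒜₁ ⊕ ⋯ ⊕ 𝒜_k → ℬ that is tracial on 𝒜_j must be identically zero. -/
theorem isPosElem_iff_nonneg {A : Type*} [NonUnitalCStarAlgebra A] [PartialOrder A]
    [StarOrderedRing A] {a : A} : IsPosElem a ↔ 0 ≤ a :=
  CStarAlgebra.nonneg_iff_eq_star_mul_self.symm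

theorem MultilinearMap.eq_zero_of_forall_mem_of_span_eq_top {R ι : Type*} {M : ι → Type*}
    {N : Type*} [CommSemiring R] [Fintype ι] [DecidableEq ι] [∀ i, AddCommMonoid (M i)]
    [∀ i, Module R (M i)] [AddCommMonoid N] [Module R N] (f : MultilinearMap R M N)
    {s : ∀ i, Set (M i)} (hs : ∀ i, Submodule.span R (s i) = ⊤)
    (hf : ∀ x, (∀ i, x i ∈ s i) → f x = 0) : f = 0 := by
  ext x
  have hx : ∀ i, ∃ (n : ℕ) (c : Fin n → R) (v : Fin n → s i), ∑ m, c m • (v m : M i) = x i :=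
    fun i => Submodule.mem_span_set'.mp (hs i ▸ Submodule.mem_top)
  choose n c v hx using hx
  rw [← funext hx, map_sum, zero_apply]
  refine Finset.sum_eq_zero fun r _ => ?_
  rw [f.map_smul_univ (fun i => c i (r i)) (fun i => (v i (r i) : M i)),
    hf _ fun i => (v i (r i)).2, smul_zero]

theorem AddMonoidHom.map_one_eq_zero_of_cuntz {A B : Type*} [NonAssocSemiring A]
    [AddLeftCancelMonoid B] (g : A →+ B) (htr : ∀ a b, g (a * b) = g (b * a))
    {V V' S S' : A} (hV : V' * V = 1) (hS : S' * S = 1) (hVS : V * V' + S * S' = 1) :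
    g 1 = 0 := by
  have h : g 1 + g 1 = g 1 :=
    calc g 1 + g 1 = g (V' * V) + g (S' * S) := by rw [hV, hS]
      _ = g 1 := by rw [htr V', htr S', ← map_add, hVS]
  exact add_eq_left.mp h

theorem LinearMap.eq_zero_of_nonneg_of_map_one_eq_zero {A B : Type*} [CStarAlgebra A]
    [PartialOrder A] [StarOrderedRing A] [AddCommGroup B] [PartialOrder B]
    [IsOrderedAddMonoid B] [Module ℂ B] (g : A →ₗ[ℂ] B) (hg : ∀ a, 0 ≤ a → 0 ≤ g a)
    (h1 : g 1 = 0) : g = 0 := by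
  refine ext_on CStarAlgebra.span_nonneg fun a (ha : 0 ≤ a) => ?_
  have hnorm : g (algebraMap ℝ A ‖a‖) = 0 := by
    rw [IsScalarTower.algebraMap_apply ℝ ℂ A, Algebra.algebraMap_eq_smul_one, map_smul, h1,
      smul_zero]
  have hle : 0 ≤ g (algebraMap ℝ A ‖a‖ - a) :=
    hg _ (sub_nonneg.2 (IsSelfAdjoint.of_nonneg ha).le_algebraMap_norm_self)
  rw [map_sub, hnorm, zero_sub, neg_nonneg] at hle
  exact le_antisymm hle (hg a ha)

/-- Remark 3.6: let `𝒜₁, …, 𝒜_k, ℬ` be unital C*-algebras such that some `𝒜ⱼ` contains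
isometries `V, S` with `V*V = S*S = 1` and `VV* + SS* = 1` (as in a properly infinite
von Neumann algebra).  Then every positive multilinear map `Ψ : ⊕ᵢ 𝒜ᵢ → ℬ` that is
tracial on the `j`-th slot is identically zero. -/
theorem positive_multilinear_tracial_on_slot_is_zero
    {k : ℕ} {A : Fin k → Type*} [∀ i, CStarAlgebra (A i)] {B : Type*} [CStarAlgebra B]
    (j : Fin k) (V S : A j) (hV : star V * V = 1) (hS : star S * S = 1)
    (hVS : V * star V + S * star S = 1)
    (Ψ : MultilinearMap ℂ A B)
    (hpos : ∀ x : ∀ i, A i, (∀ i, IsPosElem (x i)) → IsPosElem (Ψ x))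
    (htrj : ∀ (x : ∀ i, A i) (a b : A j),
      Ψ (Function.update x j (a * b)) = Ψ (Function.update x j (b * a))) :
    ∀ x : ∀ i, A i, Ψ x = 0 := by
  let (i : Fin k) : PartialOrder (A i) := CStarAlgebra.spectralOrder _
  have (i : Fin k) : StarOrderedRing (A i) := CStarAlgebra.spectralOrderedRing _
  let : PartialOrder B := CStarAlgebra.spectralOrder _
  have : StarOrderedRing B := CStarAlgebra.spectralOrderedRing _
  simp only [isPosElem_iff_nonneg] at hpos
  have hΨ : Ψ = 0 := by
    refine Ψ.eq_zero_of_forall_mem_of_span_eq_top (fun _ => CStarAlgebra.span_nonneg)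
      fun x (hx : ∀ i, 0 ≤ x i) => ?_
    have hslot : Ψ.toLinearMap x j = 0 := by
      refine LinearMap.eq_zero_of_nonneg_of_map_one_eq_zero _ (fun a ha => ?_) ?_
      · exact hpos _ ((Function.forall_update_iff x fun _ b => 0 ≤ b).2 ⟨ha, fun i _ => hx i⟩)
      · exact (Ψ.toLinearMap x j).toAddMonoidHom.map_one_eq_zero_of_cuntz (htrj x) hV hS hVS
    simpa using LinearMap.congr_fun hslot (x j)
  simp [hΨ]
end

section
/- Let Ω be a compact Hausdorff space, let ψ : 𝒜 → C(Ω) be a unital positive linear map from a unital C*-algebra 𝒜, and let φ : C(Ω) → ℬ be a unital 3-positive (not necessarily linear) map into a unital C*-algebra ℬ with φ(0) = 0, and set Φ = φ ∘ ψ. Then for every self-adjoint X ∈ 𝒜 one has φ(Var_ψ(X)) ≤ Var_Φ(X), i.e., φ(ψ(X²) − ψ(X)²) ≤ Φ(X²) − Φ(X)². -/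
open Matrix
open scoped ComplexOrder

def IsPosMap {A B : Type*} [Mul A] [Star A] [Mul B] [Star B] (ψ : A → B) : Prop :=
  ∀ a, IsPosElem a → IsPosElem (ψ a)

lemma IsPosElem.isSelfAdjoint_s14 {A : Type*} [Mul A] [StarMul A] {a : A} (ha : IsPosElem a) :
    IsSelfAdjoint a := by
  obtain ⟨b, rfl⟩ := ha
  exact IsSelfAdjoint.star_mul_self b

lemma CStarAlgebra.isPosElem_star_dotProduct_self {B ι : Type*} [CStarAlgebra B] [Fintype ι]
    (v : ι → B) : IsPosElem (star v ⬝ᵥ v) := by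
  let _ := CStarAlgebra.spectralOrder B
  have _ := CStarAlgebra.spectralOrderedRing B
  exact CStarAlgebra.nonneg_iff_eq_star_mul_self.mp
    (Finset.sum_nonneg fun i _ => star_mul_self_nonneg (v i))

lemma IsPosElem.star_dotProduct_mulVec {B ι : Type*} [CStarAlgebra B] [Fintype ι]
    {P : Matrix ι ι B} (hP : IsPosElem P) (x : ι → B) : IsPosElem (star x ⬝ᵥ (P *ᵥ x)) := by
  obtain ⟨C, rfl⟩ := hP
  rw [← mulVec_mulVec, dotProduct_mulVec, star_eq_conjTranspose, ← star_mulVec]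
  exact CStarAlgebra.isPosElem_star_dotProduct_self _

lemma ContinuousMap.isPosElem_iff_nonneg {Ω : Type*} [TopologicalSpace Ω] [CompactSpace Ω]
    {u : C(Ω, ℂ)} : IsPosElem u ↔ 0 ≤ u :=
  CStarAlgebra.nonneg_iff_eq_star_mul_self.symm

lemma IsPosMap.isSelfAdjoint_apply {𝒜 B : Type*} [Ring 𝒜] [StarRing 𝒜] [Module ℂ 𝒜]
    [Ring B] [StarRing B] [Module ℂ B] [StarModule ℂ B] {ψ : 𝒜 →ₗ[ℂ] B} (hψ : IsPosMap ψ) {X : 𝒜} (hX : IsSelfAdjoint X) :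
    IsSelfAdjoint (ψ X) := by
  have h4 : star (1 + X) * (1 + X) - star (1 - X) * (1 - X) = (4 : ℂ) • X := by
    rw [show (4 : ℂ) • X = X + X + X + X by module, star_add, star_sub, star_one, hX.star_eq]
    noncomm_ring
  have hX4 : X = (4⁻¹ : ℂ) • (star (1 + X) * (1 + X) - star (1 - X) * (1 - X)) := by
    rw [h4, smul_smul, inv_mul_cancel₀ (by norm_num : (4 : ℂ) ≠ 0), one_smul]
  rw [hX4, map_smul, map_sub]
  exact (by simp [isSelfAdjoint_iff] : IsSelfAdjoint (4⁻¹ : ℂ)).smul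
    ((hψ _ ⟨_, rfl⟩).isSelfAdjoint_s14.sub (hψ _ ⟨_, rfl⟩).isSelfAdjoint_s14)

/-- Kadison's inequality for a unital positive map into a commutative C⋆-algebra `C(Ω)`. -/
lemma IsPosMap.isPosElem_apply_mul_self_sub {𝒜 Ω : Type*} [Ring 𝒜] [StarRing 𝒜] [Algebra ℂ 𝒜]
    [StarModule ℂ 𝒜] [TopologicalSpace Ω] [CompactSpace Ω]
    {ψ : 𝒜 →ₗ[ℂ] C(Ω, ℂ)} (hψ : IsPosMap ψ) (hψ1 : ψ 1 = 1) {X : 𝒜} (hX : IsSelfAdjoint X) :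
    IsPosElem (ψ (X * X) - ψ X * ψ X) := by
  rw [ContinuousMap.isPosElem_iff_nonneg, ContinuousMap.le_def]
  intro ω
  set t : ℝ := (ψ X ω).re
  have hft : ψ X ω = t :=
    (Complex.conj_eq_iff_re.mp (congrArg (· ω) (hψ.isSelfAdjoint_apply hX).star_eq)).symm
  -- the positive element `(X - t)²` evaluates at `ω` to the variance at `ω`
  let b := X - (t : ℂ) • 1
  have hb : star b * b = X * X - (2 * t : ℂ) • X + (t ^ 2 : ℂ) • 1 := by
    simp only [b, star_sub, star_smul, hX.star_eq, star_one, Complex.star_def,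
      Complex.conj_ofReal, sub_mul, mul_sub, smul_mul_assoc, mul_smul_comm, one_mul, mul_one]
    module
  have hψb : ψ (star b * b) ω = (ψ (X * X) - ψ X * ψ X) ω := by
    simp only [hb, map_add, map_sub, map_smul, hψ1, ContinuousMap.add_apply,
      ContinuousMap.sub_apply, ContinuousMap.coe_smul, Pi.smul_apply, hft, smul_eq_mul,
      ContinuousMap.coe_one, Pi.one_apply, mul_one, ContinuousMap.mul_apply]
    ring
  rw [← hψb]
  exact ContinuousMap.le_def.mp (ContinuousMap.isPosElem_iff_nonneg.mp (hψ _ ⟨b, rfl⟩)) ω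

section FinThree

variable {R : Type*} [Ring R] [StarRing R]

lemma isPosElem_matrix_fin_three {f g : R} (hf : IsSelfAdjoint f) (hg : IsPosElem (g - f * f)) :
    IsPosElem !![1, f, 0; f, g, g - f * f; 0, g - f * f, g - f * f] := by
  obtain ⟨s, hs⟩ := hg
  refine ⟨!![1, f, 0; 0, s, s; 0, 0, 0], ?_⟩
  obtain rfl : g = f * f + star s * s := sub_eq_iff_eq_add'.mp hs
  ext i j
  fin_cases i <;> fin_cases j <;> simp [mul_apply, Fin.sum_univ_three, hf.star_eq]

lemma star_dotProduct_mulVec_fin_three {a : R} (ha : IsSelfAdjoint a) (p q : R) :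
    star ![-a, 1, -1] ⬝ᵥ (!![1, a, 0; a, p, q; 0, q, q] *ᵥ ![-a, 1, -1]) = p - a * a - q := by
  simp only [dotProduct, Pi.star_apply, mulVec, of_apply, cons_val', cons_val_fin_one,
    Fin.sum_univ_three, cons_val_zero, cons_val_one, cons_val, star_neg, star_one, ha.star_eq,
    mul_neg, mul_one, one_mul, mul_zero, zero_mul, neg_add_cancel, add_neg_cancel, neg_zero,
    add_zero, zero_add]
  noncomm_ring

end FinThree

theorem phi_of_var_le_var_of_comp_general
    {𝒜 ℬ : Type*} [CStarAlgebra 𝒜] [CStarAlgebra ℬ]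
    {Ω : Type*} [TopologicalSpace Ω] [CompactSpace Ω]
    (ψ : 𝒜 →ₗ[ℂ] C(Ω, ℂ)) (hψ1 : ψ 1 = 1)
    (hψpos : ∀ a : 𝒜, IsPosElem a → IsPosElem (ψ a))
    (φ : C(Ω, ℂ) → ℬ) (hφ1 : φ 1 = 1) (hφ0 : φ 0 = 0) (hφ3 : IsNPosMap 3 φ)
    (X : 𝒜) (hX : star X = X) :
    IsPosElem ((φ (ψ (X * X)) - φ (ψ X) * φ (ψ X)) - φ (ψ (X * X) - ψ X * ψ X)) := by
  set f := ψ X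
  set g := ψ (X * X)
  have hf : IsSelfAdjoint f := IsPosMap.isSelfAdjoint_apply hψpos hX
  have hM := hφ3 _ <| isPosElem_matrix_fin_three hf <|
    IsPosMap.isPosElem_apply_mul_self_sub hψpos hψ1 hX
  have hφM : (!![1, f, 0; f, g, g - f * f; 0, g - f * f, g - f * f]).map φ =
      !![1, φ f, 0; φ f, φ g, φ (g - f * f); 0, φ (g - f * f), φ (g - f * f)] := by
    ext i j
    fin_cases i <;> fin_cases j <;> simp [hφ0, hφ1]
  rw [hφM] at hM
  have ha : IsSelfAdjoint (φ f) := hM.isSelfAdjoint_s14.isHermitian.apply 0 1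
  rw [← star_dotProduct_mulVec_fin_three ha]
  exact hM.star_dotProduct_mulVec _

/-- Inequality (4.5): let `ψ : 𝒜 → C(Ω)` be a unital positive linear map and
`φ : C(Ω) → ℬ` a unital 3-positive map with `φ(0) = 0`, and set `Φ = φ ∘ ψ`.
Then for every self-adjoint `X`, `φ(Var_ψ(X)) ≤ Var_Φ(X)`, that is,
`φ(ψ(X²) − ψ(X)²) ≤ Φ(X²) − Φ(X)²`. -/
theorem phi_of_var_le_var_of_comp
    {𝒜 ℬ : Type*} [CStarAlgebra 𝒜] [CStarAlgebra ℬ]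
    {Ω : Type*} [TopologicalSpace Ω] [CompactSpace Ω] [T2Space Ω]
    (ψ : 𝒜 →ₗ[ℂ] C(Ω, ℂ)) (hψ1 : ψ 1 = 1)
    (hψpos : ∀ a : 𝒜, IsPosElem a → IsPosElem (ψ a))
    (φ : C(Ω, ℂ) → ℬ) (hφ1 : φ 1 = 1) (hφ0 : φ 0 = 0) (hφ3 : IsNPosMap 3 φ)
    (X : 𝒜) (hX : star X = X) :
    IsPosElem ((φ (ψ (X * X)) - φ (ψ X) * φ (ψ X)) - φ (ψ (X * X) - ψ X * ψ X)) :=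
  phi_of_var_le_var_of_comp_general ψ hψ1 hψpos φ hφ1 hφ0 hφ3 X hX
end
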